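/- If a state ρ on ℂ^{d₁}⊗⋯⊗ℂ^{d_N} possesses a tensor positive S₁×⋯×S_N-setting source operator, then every quantum S₁×⋯×S_N-setting correlation scenario on ρ (specified by arbitrary POVMs M_n^{(s_n)} on ℂ^{d_n} with finite outcome sets) admits an LHV (local hidden variable) model. -/

import Mathlib

open scoped ComplexOrder Matrix
open MeasureTheory ProbabilityTheory

namespace LqHV

/-- Entrywise tensor (Kronecker) product of a finite family of square complex matrices,
realized on the pi-type index. -/
def tprod {ι : Type} [Fintype ι] [DecidableEq ι] {κ : ι → Type} [∀ i, Fintype (κ i)]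
    (X : ∀ i, Matrix (κ i) (κ i) ℂ) : Matrix (∀ i, κ i) (∀ i, κ i) ℂ :=
  fun a b => ∏ i, X i (a i) (b i)

/-- Elementary (product) vector of a family of vectors. -/
def tvec {ι : Type} [Fintype ι] [DecidableEq ι] {κ : ι → Type} (ψ : ∀ i, κ i → ℂ) : (∀ i, κ i) → ℂ :=
  fun a => ∏ i, ψ i (a i)

/-- Tensor positivity of a matrix on a tensor product space. -/
def TensorPos {ι : Type} [Fintype ι] [DecidableEq ι] {κ : ι → Type} [∀ i, Fintype (κ i)]
    (Z : Matrix (∀ i, κ i) (∀ i, κ i) ℂ) : Prop :=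
  ∀ ψ : ∀ i, κ i → ℂ, 0 ≤ star (tvec ψ) ⬝ᵥ Z.mulVec (tvec ψ)

/-- `C` is a covering of `Z`. -/
def IsCovering {ι : Type} [Fintype ι] [DecidableEq ι] {κ : ι → Type} [∀ i, Fintype (κ i)]
    (Z C : Matrix (∀ i, κ i) (∀ i, κ i) ℂ) : Prop :=
  TensorPos C ∧ TensorPos (C + Z) ∧ TensorPos (C - Z)

/-- The covering norm. -/
noncomputable def covNorm {ι : Type} [Fintype ι] [DecidableEq ι] {κ : ι → Type} [∀ i, Fintype (κ i)]
    (Z : Matrix (∀ i, κ i) (∀ i, κ i) ℂ) : ℝ :=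
  sInf ((fun C => (Matrix.trace C).re) '' {C | IsCovering Z C})

/-- The absolute value `√(Wᴴ W)` of a matrix. -/
noncomputable def matAbs {n : Type} [Fintype n] [DecidableEq n]
    (W : Matrix n n ℂ) : Matrix n n ℂ :=
  (Matrix.posSemidef_conjTranspose_mul_self W).1.eigenvectorUnitary.1 *
    Matrix.diagonal ((↑) ∘ Real.sqrt ∘ (Matrix.posSemidef_conjTranspose_mul_self W).1.eigenvalues) *
    (star (Matrix.posSemidef_conjTranspose_mul_self W).1.eigenvectorUnitary : Matrix n n ℂ)

/-- The trace norm `tr √(Wᴴ W)`. -/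
noncomputable def traceNorm {n : Type} [Fintype n] [DecidableEq n]
    (W : Matrix n n ℂ) : ℝ :=
  ((matAbs W).trace).re

variable {N : ℕ}

/-- In the tensor product space `⊗_n (ℂ^{d n})^{⊗ S n}`, the operator that acts as `X n` in
slot `k n` of site `n` and as the identity elsewhere. -/
def slot {d S : Fin N → ℕ} (X : ∀ n, Matrix (Fin (d n)) (Fin (d n)) ℂ) (k : ∀ n, Fin (S n)) :
    ∀ p : Σ n : Fin N, Fin (S n), Matrix (Fin (d p.1)) (Fin (d p.1)) ℂ :=
  fun p => if p.2 = k p.1 then X p.1 else 1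

/-- `T` is an `S₁ × ⋯ × S_N`-setting source operator for the state `ρ`. -/
def IsSourceOp (d S : Fin N → ℕ) (ρ : Matrix (∀ n, Fin (d n)) (∀ n, Fin (d n)) ℂ)
    (T : Matrix (∀ p : Σ n : Fin N, Fin (S n), Fin (d p.1))
          (∀ p : Σ n : Fin N, Fin (S n), Fin (d p.1)) ℂ) : Prop :=
  T.IsHermitian ∧
    ∀ (X : ∀ n, Matrix (Fin (d n)) (Fin (d n)) ℂ) (k : ∀ n, Fin (S n)),
      (T * tprod (slot X k)).trace = (ρ * tprod X).trace

/-- A POVM with finite outcome set. -/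
def IsPOVM {d : ℕ} {Λ : Type} [Fintype Λ] (M : Λ → Matrix (Fin d) (Fin d) ℂ) : Prop :=
  (∀ l, (M l).PosSemidef) ∧ ∑ l, M l = 1

/-- Joint probability distributions of a quantum correlation scenario. -/
noncomputable def quantumP {d S : Fin N → ℕ} {Λ : Fin N → Type} [∀ n, Fintype (Λ n)]
    (ρ : Matrix (∀ n, Fin (d n)) (∀ n, Fin (d n)) ℂ)
    (M : ∀ n, Fin (S n) → Λ n → Matrix (Fin (d n)) (Fin (d n)) ℂ)
    (s : ∀ n, Fin (S n)) (lam : ∀ n, Λ n) : ℝ :=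
  ((ρ * tprod (fun n => M n (s n) (lam n))).trace).re

/-- A real-valued (signed) measure on the finite set `∏_n Λ_n^{S n}` is normalized. -/
def Normalized {S : Fin N → ℕ} {Λ : Fin N → Type} [∀ n, Fintype (Λ n)] [∀ n, DecidableEq (Λ n)]
    (μ : (∀ n, Fin (S n) → Λ n) → ℝ) : Prop :=
  ∑ ω, μ ω = 1

/-- `μ` returns all joint distributions `P` of the scenario as the corresponding marginals. -/
def ReturnsMarginals {S : Fin N → ℕ} {Λ : Fin N → Type} [∀ n, Fintype (Λ n)]
    [∀ n, DecidableEq (Λ n)]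
    (μ : (∀ n, Fin (S n) → Λ n) → ℝ) (P : (∀ n, Fin (S n)) → (∀ n, Λ n) → ℝ) : Prop :=
  ∀ (s : ∀ n, Fin (S n)) (lam : ∀ n, Λ n),
    (∑ ω : ∀ n, Fin (S n) → Λ n, if (fun n => ω n (s n)) = lam then μ ω else 0) = P s lam

/-- The total variation norm of a real-valued measure on a finite set. -/
noncomputable def varNorm {S : Fin N → ℕ} {Λ : Fin N → Type} [∀ n, Fintype (Λ n)]
    [∀ n, DecidableEq (Λ n)] (μ : (∀ n, Fin (S n) → Λ n) → ℝ) : ℝ :=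
  ∑ ω, |μ ω|

/-- The parameter `γ_E`: the infimum of the total variation norms over all normalized
real-valued measures returning all joint distributions of the scenario as marginals. -/
noncomputable def gammaE {S : Fin N → ℕ} {Λ : Fin N → Type} [∀ n, Fintype (Λ n)]
    [∀ n, DecidableEq (Λ n)] (P : (∀ n, Fin (S n)) → (∀ n, Λ n) → ℝ) : ℝ :=
  sInf {t | ∃ μ, Normalized μ ∧ ReturnsMarginals μ P ∧ t = varNorm μ}

/-- Integration of a bounded function with respect to a signed measure, via the Jordan
decomposition. -/
noncomputable def signedIntegral {Ω : Type} [MeasurableSpace Ω] (ν : SignedMeasure Ω)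
    (f : Ω → ℝ) : ℝ :=
  (∫ ω, f ω ∂ν.toJordanDecomposition.posPart) - ∫ ω, f ω ∂ν.toJordanDecomposition.negPart

/-- An `S₁ × ⋯ × S_N`-setting correlation scenario with finite outcome sets admits an LHV
(local hidden variable) model. -/
def AdmitsLHVFin {S : Fin N → ℕ} {Λ : Fin N → Type} [∀ n, Fintype (Λ n)]
    (P : (∀ n, Fin (S n)) → (∀ n, Λ n) → ℝ) : Prop :=
  ∃ (Ω : Type) (_ : MeasurableSpace Ω) (ν : Measure Ω) (_ : IsProbabilityMeasure ν)
    (p : ∀ n, Fin (S n) → Ω → Λ n → ℝ),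
    (∀ n s ω l, 0 ≤ p n s ω l) ∧ (∀ n s ω, ∑ l, p n s ω l = 1) ∧
    (∀ n s l, Measurable fun ω => p n s ω l) ∧
    ∀ (s : ∀ n, Fin (S n)) (lam : ∀ n, Λ n),
      P s lam = ∫ ω, ∏ n, p n (s n) ω (lam n) ∂ν

/-- An `S₁ × ⋯ × S_N`-setting correlation scenario with finite outcome sets admits an LqHV
(local quasi hidden variable) model. -/
def AdmitsLqHVFin {S : Fin N → ℕ} {Λ : Fin N → Type} [∀ n, Fintype (Λ n)]
    (P : (∀ n, Fin (S n)) → (∀ n, Λ n) → ℝ) : Prop :=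
  ∃ (Ω : Type) (_ : MeasurableSpace Ω) (ν : SignedMeasure Ω)
    (p : ∀ n, Fin (S n) → Ω → Λ n → ℝ),
    ν Set.univ = 1 ∧
    (∀ n s ω l, 0 ≤ p n s ω l) ∧ (∀ n s ω, ∑ l, p n s ω l = 1) ∧
    (∀ n s l, Measurable fun ω => p n s ω l) ∧
    ∀ (s : ∀ n, Fin (S n)) (lam : ∀ n, Λ n),
      P s lam = signedIntegral ν fun ω => ∏ n, p n (s n) ω (lam n)

end LqHV

/-! Take as hidden variable a choice `ω n s` of outcome for every setting `s` of every party `n`,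
with weight `tr[T (⊗_{n,s} M_n^{(s)}(ω n s))]`. Writing each POVM element as a sum of rank-one
matrices `ψ ψ*` shows, by tensor positivity of `T`, that the weights are nonnegative; summing out
all slots but the settings `s` and applying the source-operator identity shows that their
marginal for `s` is the quantum distribution `P_s`. Letting party `n` answer `ω n s`
deterministically is then an LHV model. -/

namespace LqHV

section Tprod

variable {ι : Type} [Fintype ι] [DecidableEq ι] {κ : ι → Type} [∀ i, Fintype (κ i)]

theorem tprod_one [∀ i, DecidableEq (κ i)] :
    tprod (fun i => (1 : Matrix (κ i) (κ i) ℂ)) = 1 := by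
  ext a b
  by_cases hab : a = b
  · subst hab
    simp [tprod]
  · obtain ⟨i, hi⟩ := Function.ne_iff.mp hab
    simp only [tprod, Matrix.one_apply, if_neg hab]
    exact Finset.prod_eq_zero (Finset.mem_univ i) (if_neg hi)

theorem sum_piFinset_tprod {Λ : ι → Type} (A : ∀ i, Finset (Λ i))
    (F : ∀ i, Λ i → Matrix (κ i) (κ i) ℂ) :
    ∑ ω ∈ Fintype.piFinset A, tprod (fun i => F i (ω i)) = tprod (fun i => ∑ l ∈ A i, F i l) := by
  ext a b
  simp only [Matrix.sum_apply, tprod]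
  exact (Finset.prod_univ_sum A fun i l => F i l (a i) (b i)).symm

theorem sum_tprod {Λ : ι → Type} [∀ i, Fintype (Λ i)] (F : ∀ i, Λ i → Matrix (κ i) (κ i) ℂ) :
    ∑ ω : ∀ i, Λ i, tprod (fun i => F i (ω i)) = tprod (fun i => ∑ l, F i l) := by
  simpa using sum_piFinset_tprod (fun _ => Finset.univ) F

theorem tprod_vecMulVec (ψ : ∀ i, κ i → ℂ) :
    tprod (fun i => Matrix.vecMulVec (ψ i) (star (ψ i))) =
      Matrix.vecMulVec (tvec ψ) (star (tvec ψ)) := by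
  ext a b
  simp [tprod, tvec, Matrix.vecMulVec_apply, Finset.prod_mul_distrib]

theorem TensorPos.trace_mul_vecMulVec_nonneg {T : Matrix (∀ i, κ i) (∀ i, κ i) ℂ}
    (hT : TensorPos T) (ψ : ∀ i, κ i → ℂ) :
    0 ≤ (T * Matrix.vecMulVec (tvec ψ) (star (tvec ψ))).trace := by
  rw [Matrix.mul_vecMulVec, Matrix.trace_vecMulVec, dotProduct_comm]
  exact hT ψ

theorem TensorPos.trace_mul_tprod_nonneg {T : Matrix (∀ i, κ i) (∀ i, κ i) ℂ}
    (hT : TensorPos T) {A : ∀ i, Matrix (κ i) (κ i) ℂ} (hA : ∀ i, (A i).PosSemidef) :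
    0 ≤ (T * tprod A).trace := by
  choose m v hv using fun i => Matrix.posSemidef_iff_eq_sum_vecMulVec.mp (hA i)
  rw [show A = fun i => ∑ j, Matrix.vecMulVec (v i j) (star (v i j)) from funext hv,
    ← sum_tprod, Finset.mul_sum, Matrix.trace_sum]
  refine Finset.sum_nonneg fun J _ => ?_
  rw [tprod_vecMulVec]
  exact hT.trace_mul_vecMulVec_nonneg _

end Tprod

section DeterministicModel

variable {N : ℕ} {S : Fin N → ℕ} {Λ : Fin N → Type} [∀ n, Fintype (Λ n)] [∀ n, DecidableEq (Λ n)]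
  {μ : (∀ n, Fin (S n) → Λ n) → ℝ} {P : (∀ n, Fin (S n)) → (∀ n, Λ n) → ℝ}

theorem ReturnsMarginals.sum_eq (h : ReturnsMarginals μ P) (s : ∀ n, Fin (S n)) :
    ∑ ω, μ ω = ∑ lam, P s lam := by
  simp_rw [← h s]
  rw [Finset.sum_comm]
  simp

theorem admitsLHVFin_of_returnsMarginals (hμ : ∀ ω, 0 ≤ μ ω) (hnorm : Normalized μ)
    (h : ReturnsMarginals μ P) : AdmitsLHVFin P := by
  let _ : MeasurableSpace (∀ n, Fin (S n) → Λ n) := ⊤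
  have : MeasurableSingletonClass (∀ n, Fin (S n) → Λ n) := ⟨fun _ => trivial⟩
  let ν := PMF.ofFintype (fun ω => ENNReal.ofReal (μ ω)) (by
    rw [← ENNReal.ofReal_sum_of_nonneg fun ω _ => hμ ω, hnorm, ENNReal.ofReal_one])
  refine ⟨_, ⊤, ν.toMeasure, inferInstance, fun n s ω l => if ω n s = l then 1 else 0,
    fun n s ω l => by positivity, fun n s ω => by simp, fun n s l _ _ => trivial, fun s lam => ?_⟩
  rw [PMF.integral_eq_sum, ← h s lam]
  refine Finset.sum_congr rfl fun ω _ => ?_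
  simp [ν, ENNReal.toReal_ofReal (hμ ω), Finset.prod_boole, funext_iff]

end DeterministicModel

section SourceWeight

variable {N : ℕ} {d S : Fin N → ℕ} {Λ : Fin N → Type}

noncomputable def sourceWeight
    (T : Matrix (∀ p : Σ n : Fin N, Fin (S n), Fin (d p.1))
      (∀ p : Σ n : Fin N, Fin (S n), Fin (d p.1)) ℂ)
    (M : ∀ n, Fin (S n) → Λ n → Matrix (Fin (d n)) (Fin (d n)) ℂ)
    (ω : ∀ n, Fin (S n) → Λ n) : ℝ :=
  ((T * tprod fun p : Σ n : Fin N, Fin (S n) => M p.1 p.2 (ω p.1 p.2)).trace).re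

theorem sourceWeight_nonneg
    {T : Matrix (∀ p : Σ n : Fin N, Fin (S n), Fin (d p.1))
      (∀ p : Σ n : Fin N, Fin (S n), Fin (d p.1)) ℂ} (hT : TensorPos T)
    {M : ∀ n, Fin (S n) → Λ n → Matrix (Fin (d n)) (Fin (d n)) ℂ}
    (hM : ∀ n s l, (M n s l).PosSemidef) (ω : ∀ n, Fin (S n) → Λ n) :
    0 ≤ sourceWeight T M ω :=
  (Complex.nonneg_iff.mp (hT.trace_mul_tprod_nonneg fun _ => hM _ _ _)).1

variable [∀ n, Fintype (Λ n)]

theorem sum_quantumP (ρ : Matrix (∀ n, Fin (d n)) (∀ n, Fin (d n)) ℂ)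
    {M : ∀ n, Fin (S n) → Λ n → Matrix (Fin (d n)) (Fin (d n)) ℂ}
    (hM : ∀ n s, ∑ l, M n s l = 1) (s : ∀ n, Fin (S n)) :
    ∑ lam, quantumP ρ M s lam = ρ.trace.re := by
  simp only [quantumP, ← Complex.re_sum, ← Matrix.trace_sum, ← Finset.mul_sum,
    sum_tprod fun n l => M n (s n) l, hM, tprod_one, mul_one]

def fiberBox (s : ∀ n, Fin (S n)) (lam : ∀ n, Λ n)
    (p : Σ n : Fin N, Fin (S n)) : Finset (Λ p.1) :=
  if p.2 = s p.1 then {lam p.1} else Finset.univ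

theorem sum_fiberBox_povm {M : ∀ n, Fin (S n) → Λ n → Matrix (Fin (d n)) (Fin (d n)) ℂ}
    (hM : ∀ n s, ∑ l, M n s l = 1) (s : ∀ n, Fin (S n)) (lam : ∀ n, Λ n)
    (p : Σ n : Fin N, Fin (S n)) :
    ∑ l ∈ fiberBox s lam p, M p.1 p.2 l = slot (fun n => M n (s n) (lam n)) s p := by
  obtain ⟨n, j⟩ := p
  by_cases hj : j = s n
  · subst hj
    simp [fiberBox, slot]
  · simp [fiberBox, slot, hj, hM]

variable [∀ n, DecidableEq (Λ n)]

theorem sum_ite_eq_sum_piFinset_fiberBox {β : Type} [AddCommMonoid β]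
    (f : (∀ n, Fin (S n) → Λ n) → β) (s : ∀ n, Fin (S n)) (lam : ∀ n, Λ n) :
    ∑ ω, (if (fun n => ω n (s n)) = lam then f ω else 0) =
      ∑ ω ∈ Fintype.piFinset (fiberBox s lam), f (Equiv.piCurry (fun _ _ => Λ _) ω) := by
  rw [← (Equiv.piCurry fun n (_ : Fin (S n)) => Λ n).sum_comp, ← Finset.sum_filter]
  refine Finset.sum_congr (Finset.ext fun ω => ?_) fun _ _ => rfl
  simp only [Finset.mem_filter, Finset.mem_univ, true_and, Fintype.mem_piFinset, funext_iff]
  constructor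
  · rintro h ⟨n, j⟩
    by_cases hj : j = s n
    · subst hj
      simpa [fiberBox, Sigma.curry] using h n
    · simp [fiberBox, hj]
  · intro h n
    simpa [fiberBox, Sigma.curry] using h ⟨n, s n⟩

theorem returnsMarginals_sourceWeight {ρ : Matrix (∀ n, Fin (d n)) (∀ n, Fin (d n)) ℂ}
    {T : Matrix (∀ p : Σ n : Fin N, Fin (S n), Fin (d p.1))
      (∀ p : Σ n : Fin N, Fin (S n), Fin (d p.1)) ℂ} (hT : IsSourceOp d S ρ T)
    {M : ∀ n, Fin (S n) → Λ n → Matrix (Fin (d n)) (Fin (d n)) ℂ}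
    (hM : ∀ n s, ∑ l, M n s l = 1) :
    ReturnsMarginals (sourceWeight T M) (quantumP ρ M) := by
  intro s lam
  calc ∑ ω, (if (fun n => ω n (s n)) = lam then sourceWeight T M ω else 0)
      = ((T * ∑ ω ∈ Fintype.piFinset (fiberBox s lam),
          tprod fun p => M p.1 p.2 (ω p)).trace).re := by
        rw [sum_ite_eq_sum_piFinset_fiberBox, Finset.mul_sum, Matrix.trace_sum, Complex.re_sum]
        rfl
    _ = ((T * tprod (slot (fun n => M n (s n) (lam n)) s)).trace).re := by
        rw [sum_piFinset_tprod]
        simp only [sum_fiberBox_povm hM]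
    _ = quantumP ρ M s lam := by
        rw [hT.2]
        rfl

end SourceWeight

end LqHV

open LqHV in
theorem tensorPos_source_op_implies_LHV_general {N : ℕ} (d S : Fin N → ℕ) (hS : ∀ n, 1 ≤ S n)
    (T : Matrix (∀ p : Σ n : Fin N, Fin (S n), Fin (d p.1))
          (∀ p : Σ n : Fin N, Fin (S n), Fin (d p.1)) ℂ)
    (ρ : Matrix (∀ n, Fin (d n)) (∀ n, Fin (d n)) ℂ)
    (hρtr : ρ.trace = 1)
    (hT : IsSourceOp d S ρ T) (hTpos : TensorPos T)
    {Λ : Fin N → Type} [∀ n, Fintype (Λ n)]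
    (M : ∀ n, Fin (S n) → Λ n → Matrix (Fin (d n)) (Fin (d n)) ℂ)
    (hM : ∀ n s, IsPOVM (M n s)) :
    AdmitsLHVFin (quantumP ρ M) := by
  classical
  have hmarg := returnsMarginals_sourceWeight hT fun n s => (hM n s).2
  refine admitsLHVFin_of_returnsMarginals (sourceWeight_nonneg hTpos fun n s => (hM n s).1)
    ?_ hmarg
  rw [Normalized, hmarg.sum_eq fun n => ⟨0, hS n⟩, sum_quantumP ρ fun n s => (hM n s).2, hρtr,
    Complex.one_re]

open LqHV in
/-- If a state `ρ` on `ℂ^{d₁} ⊗ ⋯ ⊗ ℂ^{d_N}` possesses a tensor positive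
`S₁ × ⋯ × S_N`-setting source operator, then every quantum `S₁ × ⋯ × S_N`-setting correlation
scenario on `ρ` (specified by arbitrary POVMs with finite outcome sets) admits an LHV model. -/
theorem tensorPos_source_op_implies_LHV {N : ℕ} (d S : Fin N → ℕ) (hS : ∀ n, 1 ≤ S n)
    (T : Matrix (∀ p : Σ n : Fin N, Fin (S n), Fin (d p.1))
          (∀ p : Σ n : Fin N, Fin (S n), Fin (d p.1)) ℂ)
    (ρ : Matrix (∀ n, Fin (d n)) (∀ n, Fin (d n)) ℂ)
    (hρ : ρ.PosSemidef) (hρtr : ρ.trace = 1)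
    (hT : IsSourceOp d S ρ T) (hTpos : TensorPos T)
    {Λ : Fin N → Type} [∀ n, Fintype (Λ n)] [∀ n, DecidableEq (Λ n)]
    (M : ∀ n, Fin (S n) → Λ n → Matrix (Fin (d n)) (Fin (d n)) ℂ)
    (hM : ∀ n s, IsPOVM (M n s)) :
    AdmitsLHVFin (quantumP ρ M) :=
  tensorPos_source_op_implies_LHV_general d S hS T ρ hρtr hT hTpos M hM
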